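/- arXiv:math/0103153 — 3 statements merged into one kernel-verified Lean document; each statement's English description precedes it below -/
import Mathlib

section
/- Assume the Continuum Hypothesis (2^{ℵ₀} = ℵ₁). Then for every k ≥ 2, the partial order ℙ^k does not have property K_{2^k}: there exists an uncountable set X ⊆ ℙ^k such that every uncountable Y ⊆ X contains 2^k many elements with no common lower bound in ℙ^k. -/
open Cardinal

/-- The initial segment `x↾i` of `x : n^ω`, as a finite sequence. -/
def seg {n : ℕ} (x : ℕ → Fin n) (i : ℕ) : List (Fin n) :=
  List.ofFn (fun j : Fin i => x j)

/-- `π` k-constantly predicts `x`: for all but finitely many `m` there is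
`i ∈ [m, m+k)` with `x i = π (x↾i)`. -/
def KPred {n : ℕ} (k : ℕ) (π : List (Fin n) → Fin n) (x : ℕ → Fin n) : Prop :=
  ∃ N, ∀ m, N ≤ m → ∃ i, m ≤ i ∧ i < m + k ∧ x i = π (seg x i)

/-- `π` weakly k-constantly predicts `x`: for all but finitely many `m` there is
`i < k` with `x (m*k+i) = π (x↾(m*k+i))`. -/
def WPred {n : ℕ} (k : ℕ) (π : List (Fin n) → Fin n) (x : ℕ → Fin n) : Prop :=
  ∃ N, ∀ m, N ≤ m → ∃ i, i < k ∧ x (m * k + i) = π (seg x (m * k + i))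

/-- The k-constant prediction number 𝔳ₙᶜᵒⁿˢᵗ(k). -/
noncomputable def vConst (n k : ℕ) : Cardinal :=
  sInf { c | ∃ P : Set (List (Fin n) → Fin n), #P = c ∧
    ∀ x : ℕ → Fin n, ∃ π ∈ P, KPred k π x }

/-- The weak k-constant prediction number 𝔳̄ₙᶜᵒⁿˢᵗ(k). -/
noncomputable def vBar (n k : ℕ) : Cardinal :=
  sInf { c | ∃ P : Set (List (Fin n) → Fin n), #P = c ∧
    ∀ x : ℕ → Fin n, ∃ π ∈ P, WPred k π x }

/-- The k-constant evasion number 𝔢ₙᶜᵒⁿˢᵗ(k). -/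
noncomputable def eConst (n k : ℕ) : Cardinal :=
  sInf { c | ∃ F : Set (ℕ → Fin n), #F = c ∧
    ∀ π : List (Fin n) → Fin n, ∃ x ∈ F, ¬ KPred k π x }

/-- The weak k-constant evasion number 𝔢̄ₙᶜᵒⁿˢᵗ(k). -/
noncomputable def eBar (n k : ℕ) : Cardinal :=
  sInf { c | ∃ F : Set (ℕ → Fin n), #F = c ∧
    ∀ π : List (Fin n) → Fin n, ∃ x ∈ F, ¬ WPred k π x }

/-- A condition `(ℓ, σ, F)` of the partial order `ℙᵏ`: `ℓ ∈ ω`, `σ : 2^{≤ℓ} → 2`,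
`F ⊆ 2^ω` finite, with `f↾ℓ ≠ g↾ℓ` for distinct `f, g ∈ F` and `σ(f↾ℓ) = f(ℓ)` for `f ∈ F`. -/
structure PCond (k : ℕ) : Type where
  len : ℕ
  sig : { l : List (Fin 2) // l.length ≤ len } → Fin 2
  F : Set (ℕ → Fin 2)
  Ffin : F.Finite
  sep : ∀ f ∈ F, ∀ g ∈ F, f ≠ g → seg f len ≠ seg g len
  prd : ∀ f ∈ F, sig ⟨seg f len, by simp [seg]⟩ = f len

/-- The order on `ℙᵏ`: `(m, τ, G) ≤ (ℓ, σ, F)` iff `m ≥ ℓ`, `τ ⊇ σ`, `G ⊇ F`, and for every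
`f ∈ F` and every interval `I ⊆ (ℓ, m)` of length `k` there is `i ∈ I` with `τ(f↾i) = f(i)`. -/
structure PLE (k : ℕ) (q p : PCond k) : Prop where
  hlen : p.len ≤ q.len
  hsig : ∀ (l : List (Fin 2)) (h : l.length ≤ p.len),
    q.sig ⟨l, h.trans hlen⟩ = p.sig ⟨l, h⟩
  hF : p.F ⊆ q.F
  hpred : ∀ f ∈ p.F, ∀ a : ℕ, p.len < a → ∀ _ : a + k ≤ q.len,
    ∃ i, ∃ _ : a ≤ i, ∃ _ : i < a + k,
      q.sig ⟨seg f i, by simp only [seg, List.length_ofFn]; omega⟩ = f i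

namespace Stmt11Aux

open scoped Classical

lemma seg_length {n : ℕ} (x : ℕ → Fin n) (m : ℕ) : (seg x m).length = m := by
  simp [seg]

lemma seg_getElem {n : ℕ} (x : ℕ → Fin n) (m j : ℕ) (h : j < (seg x m).length) :
    (seg x m)[j] = x j := by
  simp [seg]

lemma seg_val {n : ℕ} {x : ℕ → Fin n} {m : ℕ} {L : List (Fin n)} (h : seg x m = L)
    {j : ℕ} (hL : j < L.length) : x j = L[j] := by
  subst h; rw [seg_getElem]

def Thin (T : Set (List (Fin 2))) : Prop := ∀ s ∈ T, ∃ t, s ++ t ∉ T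

section Evader

variable (T : ℕ → Set (List (Fin 2))) (g : ℕ → ℕ → Fin 2)

noncomputable def ext1 (c : List (Fin 2)) (n : ℕ) : List (Fin 2) :=
  if h : Thin (T n) ∧ c ∈ T n then c ++ Classical.choose (h.1 c h.2) else c

lemma ext1_prefix (c : List (Fin 2)) (n : ℕ) : c <+: ext1 T c n := by
  unfold ext1; split
  · exact List.prefix_append _ _
  · exact List.prefix_refl _

noncomputable def chain : ℕ → List (Fin 2)
  | 0 => [0]
  | n+1 => (ext1 T (chain n) n) ++ [1 - g n (ext1 T (chain n) n).length]

lemma chain_succ (n : ℕ) : chain T g (n+1)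
    = (ext1 T (chain T g n) n) ++ [1 - g n (ext1 T (chain T g n) n).length] := rfl

lemma chain_prefix_succ (n : ℕ) : chain T g n <+: chain T g (n+1) := by
  rw [chain_succ]
  exact (ext1_prefix T (chain T g n) n).trans (List.prefix_append _ _)

lemma chain_prefix {m n : ℕ} (h : m ≤ n) : chain T g m <+: chain T g n := by
  induction n with
  | zero => cases Nat.le_zero.mp h; exact List.prefix_refl _
  | succ n ih =>
    rcases Nat.lt_or_ge m (n+1) with h' | h'
    · exact (ih (by omega)).trans (chain_prefix_succ T g n)
    · have : m = n + 1 := by omega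
      subst this; exact List.prefix_refl _

lemma chain_length (n : ℕ) : n < (chain T g n).length := by
  induction n with
  | zero => simp [chain]
  | succ n ih =>
    have h1 := (ext1_prefix T (chain T g n) n).length_le
    have h2 : (chain T g (n+1)).length = (ext1 T (chain T g n) n).length + 1 := by
      rw [chain_succ]; simp
    omega

noncomputable def ev (n : ℕ) : Fin 2 :=
  (chain T g (n+1)).getD n 0

lemma ev_eq {n m : ℕ} (h : n < (chain T g m).length) : ev T g n = (chain T g m)[n] := by
  have hn : n < (chain T g (n+1)).length := by
    have := chain_length T g (n+1); omega
  rcases Nat.le_total (n+1) m with hm | hm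
  · rw [ev, List.getD_eq_getElem _ _ hn]
    exact (chain_prefix T g hm).getElem hn
  · rw [ev, List.getD_eq_getElem _ _ hn]
    exact ((chain_prefix T g hm).getElem h).symm

lemma seg_ev_take {m j : ℕ} (h : m ≤ (chain T g j).length) :
    seg (ev T g) m = (chain T g j).take m := by
  apply List.ext_getElem
  · rw [seg_length]; simp; omega
  · intro i h1 h2
    rw [seg_getElem, List.getElem_take]
    exact ev_eq T g (by rw [seg_length] at h1; omega)

lemma exists_evader :
    ∃ f : ℕ → Fin 2, f 0 = 0 ∧ (∀ n, f ≠ g n) ∧ ∀ n, Thin (T n) → ∃ m, seg f m ∉ T n := by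
  refine ⟨ev T g, ?_, ?_, ?_⟩
  · have h0 : (0:ℕ) < (chain T g 0).length := by simp [chain]
    rw [ev_eq T g h0]; simp [chain]
  · intro n hne
    have hlen : (chain T g (n+1)).length = (ext1 T (chain T g n) n).length + 1 := by
      rw [chain_succ]; simp
    set p := (ext1 T (chain T g n) n).length with hp
    have hval : ev T g p = 1 - g n p := by
      rw [ev_eq T g (m := n+1) (by omega)]
      rw [List.getElem_of_eq (chain_succ T g n)]
      rw [List.getElem_append_right (le_refl p)]
      simp
      rfl
    have hcontra := congrFun hne p
    rw [hval] at hcontra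
    revert hcontra
    generalize g n p = x
    have : ∀ x : Fin 2, 1 - x ≠ x := by decide
    exact this x
  · intro n hThin
    by_cases hc : chain T g n ∈ T n
    · have hd : Thin (T n) ∧ chain T g n ∈ T n := ⟨hThin, hc⟩
      have hdef : ext1 T (chain T g n) n
          = chain T g n ++ Classical.choose (hd.1 (chain T g n) hd.2) := by
        rw [ext1, dif_pos hd]
      have hspec := Classical.choose_spec (hd.1 (chain T g n) hd.2)
      refine ⟨(ext1 T (chain T g n) n).length, ?_⟩
      have hpre : ext1 T (chain T g n) n <+: chain T g (n+1) := by
        rw [chain_succ]; exact List.prefix_append _ _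
      rw [seg_ev_take T g hpre.length_le, ← List.prefix_iff_eq_take.mp hpre, hdef]
      exact hspec
    · refine ⟨(chain T g n).length, ?_⟩
      rw [seg_ev_take T g (le_refl (chain T g n).length), List.take_length]
      exact hc

end Evader


def nodeSet (S : Set (ℕ → Fin 2)) : Set (List (Fin 2)) :=
  {s | ¬ {g ∈ S | seg g s.length = s}.Countable}

lemma nodeSet_nonempty {S : Set (ℕ → Fin 2)} {s : List (Fin 2)} (h : s ∈ nodeSet S) :
    ∃ g ∈ S, seg g s.length = s := by
  by_contra hc
  push_neg at hc
  apply h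
  have he : {g ∈ S | seg g s.length = s} = ∅ := by
    ext g; simp only [Set.mem_setOf_eq, Set.mem_empty_iff_false, iff_false, not_and]
    exact hc g
  rw [he]; exact Set.countable_empty

lemma exists_luzin (hCH : Cardinal.continuum.{0} = Cardinal.aleph.{0} 1) :
    ∃ F : Set (ℕ → Fin 2), ¬ F.Countable ∧ (∀ g ∈ F, g 0 = 0) ∧
      ∀ S, S ⊆ F → ¬ S.Countable → ∃ s ∈ nodeSet S, ∀ t, s ++ t ∈ nodeSet S := by
  set ι := (Cardinal.aleph 1).ord.ToType with hι
  haveI : Nonempty ι := Ordinal.toType_nonempty_iff_ne_zero.mpr (by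
    intro h
    have h2 : ((Cardinal.aleph 1).ord).card = 0 := by rw [h]; simp
    rw [Cardinal.card_ord] at h2
    exact (Cardinal.aleph_pos 1).ne' h2)
  have hIio : ∀ i : ι, (Set.Iio i).Countable := fun i =>
    (Cardinal.countable_iff_lt_aleph_one _).mpr (Cardinal.mk_Iio_ord_toType i)
  have hmk : #ι = #(Set (List (Fin 2))) := by
    rw [Cardinal.mk_set, Cardinal.mk_list_eq_aleph0, Cardinal.two_power_aleph0, hCH]
    exact Cardinal.mk_ord_toType _
  
  obtain ⟨eqv⟩ := Cardinal.eq.mp hmk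
  set φ : ι → Set (List (Fin 2)) := fun i => eqv i with hφ
  have key : ∀ i : ι, ∀ prev : (j : ι) → j < i → (ℕ → Fin 2),
      ∃ h : ℕ → Fin 2, h 0 = 0 ∧ (∀ j (hj : j < i), h ≠ prev j hj) ∧
        (∀ j, j < i → Thin (φ j) → ∃ m, seg h m ∉ φ j) := by
    intro i prev
    obtain ⟨e, he⟩ := Set.countable_iff_exists_subset_range.mp (hIio i)
    obtain ⟨f, h0, hne, hth⟩ := exists_evader (fun n => φ (e n))
      (fun n => if h : e n < i then prev (e n) h else fun _ => 0)
    refine ⟨f, h0, ?_, ?_⟩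
    · intro j hj
      obtain ⟨n, rfl⟩ := he hj
      have := hne n
      rwa [dif_pos hj] at this
    · intro j hj hthin
      obtain ⟨n, rfl⟩ := he hj
      exact hth n hthin
  have wf : WellFounded ((· < ·) : ι → ι → Prop) := wellFounded_lt
  set f : ι → ℕ → Fin 2 := WellFounded.fix wf
    (fun i prev => Classical.choose (key i prev)) with hfdef
  have hfix : ∀ i, f i = Classical.choose (key i (fun j _ => f j)) := fun i =>
    WellFounded.fix_eq wf _ i
  have hprop : ∀ i : ι, (f i) 0 = 0 ∧ (∀ j (_ : j < i), f i ≠ f j) ∧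
      (∀ j, j < i → Thin (φ j) → ∃ m, seg (f i) m ∉ φ j) := by
    intro i
    have := Classical.choose_spec (key i (fun j _ => f j))
    rwa [← hfix i] at this
  have hinj : Function.Injective f := by
    intro i j hij
    by_contra hne
    rcases lt_trichotomy i j with h | h | h
    · exact (hprop j).2.1 i h hij.symm
    · exact hne h
    · exact (hprop i).2.1 j h hij
  refine ⟨Set.range f, ?_, ?_, ?_⟩
  · rw [Cardinal.countable_iff_lt_aleph_one, Cardinal.mk_range_eq f hinj,
      Cardinal.mk_ord_toType]
    exact lt_irrefl _
  · rintro g ⟨i, rfl⟩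
    exact (hprop i).1
  · intro S hSF hSc
    by_contra hcon
    push_neg at hcon
    have hThin : Thin (nodeSet S) := fun s hs => hcon s hs
    obtain ⟨j0, hj0⟩ := eqv.surjective (nodeSet S)
    have hj0' : φ j0 = nodeSet S := hj0
    apply hSc
    have hsub : S ⊆ (⋃ s : List (Fin 2),
        (if s ∈ nodeSet S then (∅ : Set (ℕ → Fin 2)) else {g ∈ S | seg g s.length = s}))
        ∪ (f '' (Set.Iic j0)) := by
      intro x hx
      by_cases hall : ∀ m, seg x m ∈ nodeSet S
      · right
        obtain ⟨i, rfl⟩ := hSF hx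
        refine ⟨i, ?_, rfl⟩
        by_contra hgt
        rw [Set.mem_Iic, not_le] at hgt
        obtain ⟨m, hm⟩ := (hprop i).2.2 j0 hgt (by rwa [hj0'])
        rw [hj0'] at hm
        exact hm (hall m)
      · left
        push_neg at hall
        obtain ⟨m, hm⟩ := hall
        refine Set.mem_iUnion.mpr ⟨seg x m, ?_⟩
        rw [if_neg hm]
        exact ⟨hx, by rw [seg_length]⟩
    refine Set.Countable.mono hsub (Set.Countable.union ?_ ?_)
    · refine Set.countable_iUnion fun s => ?_
      split
      · exact Set.countable_empty
      · next hs => exact not_not.mp hs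
    · refine Set.Countable.image ?_ _
      rw [← Set.Iio_insert]
      exact (hIio j0).insert j0

def mkCond (k : ℕ) (f : ℕ → Fin 2) : PCond k where
  len := 0
  sig := fun _ => f 0
  F := {f}
  Ffin := Set.finite_singleton f
  sep := by
    intro a ha b hb hab
    rw [Set.mem_singleton_iff] at ha hb
    subst ha; subst hb
    exact absurd rfl hab
  prd := by
    intro a ha
    rw [Set.mem_singleton_iff] at ha
    subst ha
    rfl

lemma mkCond_injective (k : ℕ) : Function.Injective (mkCond k) := by
  intro a b h
  have hF := congrArg PCond.F h
  simpa [mkCond] using hF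

def pat (k : ℕ) (i : Fin (2 ^ k)) : Fin k → Fin 2 := finFunctionFinEquiv.symm i

lemma pat_apply (k : ℕ) (t : Fin k → Fin 2) : pat k (finFunctionFinEquiv t) = t :=
  Equiv.symm_apply_apply _ _

lemma pat_injective (k : ℕ) : Function.Injective (pat k) :=
  finFunctionFinEquiv.symm.injective

variable {k : ℕ}

noncomputable def eL (q : PCond k) (s : List (Fin 2)) : ℕ → List (Fin 2)
  | 0 => s
  | j+1 => eL q s j ++ [if h : (eL q s j).length ≤ q.len then 1 - q.sig ⟨eL q s j, h⟩ else 0]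

noncomputable def eBit (q : PCond k) (s : List (Fin 2)) (j : ℕ) : Fin 2 :=
  if h : (eL q s j).length ≤ q.len then 1 - q.sig ⟨eL q s j, h⟩ else 0

lemma eL_succ (q : PCond k) (s : List (Fin 2)) (j : ℕ) :
    eL q s (j+1) = eL q s j ++ [eBit q s j] := rfl

lemma eL_len (q : PCond k) (s : List (Fin 2)) (j : ℕ) :
    (eL q s j).length = s.length + j := by
  induction j with
  | zero => rfl
  | succ j ih => rw [eL_succ, List.length_append, ih]; simp; omega

lemma eL_prefix (q : PCond k) (s : List (Fin 2)) {m m' : ℕ} (h : m ≤ m') :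
    eL q s m <+: eL q s m' := by
  induction m' with
  | zero => cases Nat.le_zero.mp h; exact List.prefix_refl _
  | succ m' ih =>
    rcases Nat.lt_or_ge m (m'+1) with h' | h'
    · exact (ih (by omega)).trans (by rw [eL_succ]; exact List.prefix_append _ _)
    · have : m = m' + 1 := by omega
      subst this; exact List.prefix_refl _

lemma eL_ofFn (q : PCond k) (s : List (Fin 2)) (j : ℕ) :
    eL q s j = s ++ List.ofFn (fun x : Fin j => eBit q s x) := by
  induction j with
  | zero => simp [eL]
  | succ j ih =>
    rw [eL_succ, ih, List.ofFn_succ']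
    simp [List.concat_eq_append, List.append_assoc, Fin.coe_castSucc, Fin.val_last]

lemma eBit_eq (q : PCond k) (s : List (Fin 2)) (j : ℕ)
    (h : (eL q s j).length ≤ q.len) : eBit q s j = 1 - q.sig ⟨eL q s j, h⟩ :=
  dif_pos h

def tZero (k : ℕ) : Fin k → Fin 2 := fun _ => 0

def tOne (k : ℕ) : Fin k → Fin 2 := fun x => if (x : ℕ) = k - 1 then 1 else 0

lemma tZero_val (k j : ℕ) (hj : j < k) : tZero k ⟨j, hj⟩ = 0 := rfl

lemma tOne_val (k j : ℕ) (hj : j < k) :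
    tOne k ⟨j, hj⟩ = if j = k - 1 then 1 else 0 := rfl

end Stmt11Aux

/-- Under CH, `ℙᵏ` does not have property K_{2ᵏ}: there is an uncountable `X ⊆ ℙᵏ` such that
every uncountable `Y ⊆ X` contains `2ᵏ` many elements with no common lower bound. -/
theorem stmt11 (k : ℕ) (hk : 2 ≤ k)
    (hCH : Cardinal.continuum = Cardinal.aleph 1) :
    ∃ X : Set (PCond k), ¬ X.Countable ∧
      ∀ Y : Set (PCond k), Y ⊆ X → ¬ Y.Countable →
        ∃ e : Fin (2 ^ k) → PCond k, Function.Injective e ∧ (∀ i, e i ∈ Y) ∧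
          ¬ ∃ q : PCond k, ∀ i, PLE k q (e i) := by
  classical
  have hCH0 : Cardinal.continuum.{0} = Cardinal.aleph.{0} 1 := by
    refine Cardinal.lift_injective ?_
    rw [Cardinal.lift_continuum, Cardinal.lift_aleph]
    simpa using hCH
  obtain ⟨F, hFc, hF0, hFmain⟩ := Stmt11Aux.exists_luzin hCH0
  refine ⟨Stmt11Aux.mkCond k '' F, ?_, ?_⟩
  · intro h
    exact hFc (Set.Countable.mono (Set.subset_preimage_image _ _)
      (h.preimage (Stmt11Aux.mkCond_injective k)))
  · intro Y hYX hYc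
    set S : Set (ℕ → Fin 2) := {g | g ∈ F ∧ Stmt11Aux.mkCond k g ∈ Y} with hSdef
    have hSsub : S ⊆ F := fun g hg => hg.1
    have hYsub : Y ⊆ Stmt11Aux.mkCond k '' S := by
      intro y hy
      obtain ⟨g, hgF, rfl⟩ := hYX hy
      exact ⟨g, ⟨hgF, hy⟩, rfl⟩
    have hSc : ¬ S.Countable := fun h => hYc (Set.Countable.mono hYsub (h.image _))
    obtain ⟨s, hsmem, hsfull⟩ := hFmain S hSsub hSc
    have ha : 1 ≤ s.length := by
      by_contra hlt
      have hs0 : s = [] := List.length_eq_zero_iff.mp (by omega)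
      have h1 : s ++ [1] ∈ Stmt11Aux.nodeSet S := hsfull [1]
      apply h1
      have he : {g ∈ S | seg g (s ++ [1]).length = s ++ [1]} = ∅ := by
        ext g
        simp only [Set.mem_setOf_eq, Set.mem_empty_iff_false, iff_false, not_and]
        intro hgS hseg
        rw [hs0, List.nil_append] at hseg
        have hlen1 : ([(1:Fin 2)]).length = 1 := rfl
        rw [hlen1] at hseg
        have hkey : g 0 = ([(1:Fin 2)])[0]'(by norm_num) :=
          Stmt11Aux.seg_val hseg (by norm_num)
        have h0 : g 0 = 0 := hF0 g (hSsub hgS)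
        rw [h0] at hkey
        exact absurd hkey (by decide)
      rw [he]
      exact Set.countable_empty
    have hchoose : ∀ i : Fin (2 ^ k), ∃ g, g ∈ S ∧
        seg g (s.length + k) = s ++ List.ofFn (Stmt11Aux.pat k i) := by
      intro i
      obtain ⟨g, hg1, hg2⟩ :=
        Stmt11Aux.nodeSet_nonempty (hsfull (List.ofFn (Stmt11Aux.pat k i)))
      refine ⟨g, hg1, ?_⟩
      rwa [List.length_append, List.length_ofFn] at hg2
    choose gg hggS hggseg using hchoose
    have hval : ∀ (i : Fin (2 ^ k)) (j : ℕ) (hj : j < s.length + k),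
        gg i j = (s ++ List.ofFn (Stmt11Aux.pat k i))[j]'(by
          rw [List.length_append, List.length_ofFn]; omega) := by
      intro i j hj
      exact Stmt11Aux.seg_val (hggseg i) _
    have hv' : ∀ (t : Fin k → Fin 2) (x : ℕ) (hx : s.length ≤ x) (hx2 : x < s.length + k),
        gg (finFunctionFinEquiv t) x = t ⟨x - s.length, by omega⟩ := by
      intro t x hx hx2
      rw [hval _ x hx2, List.getElem_append_right hx, List.getElem_ofFn,
        Stmt11Aux.pat_apply]
    have hvlow : ∀ (i : Fin (2 ^ k)) (x : ℕ) (hx : x < s.length), gg i x = s[x]'hx := by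
      intro i x hx
      rw [hval i x (by omega), List.getElem_append_left hx]
    refine ⟨fun i => Stmt11Aux.mkCond k (gg i), ?_, ?_, ?_⟩
    · intro i j hij
      have hg : gg i = gg j := Stmt11Aux.mkCond_injective k hij
      have h2 : s ++ List.ofFn (Stmt11Aux.pat k i) = s ++ List.ofFn (Stmt11Aux.pat k j) := by
        rw [← hggseg i, ← hggseg j, hg]
      have hofn := List.append_cancel_left h2
      exact Stmt11Aux.pat_injective k (List.ofFn_inj.mp hofn)
    · intro i
      exact (hggS i).2
    · rintro ⟨q, hq⟩
      have hmemq : ∀ i, gg i ∈ q.F := fun i => (hq i).hF rfl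
      have hqlen : s.length + k ≤ q.len := by
        by_contra hql
        push_neg at hql
        have h0 : gg (finFunctionFinEquiv (Stmt11Aux.tZero k)) (s.length + (k-1)) = 0 := by
          rw [hv' _ _ (Nat.le_add_right _ _) (by omega)]
          rw [Stmt11Aux.tZero_val]
        have h1 : gg (finFunctionFinEquiv (Stmt11Aux.tOne k)) (s.length + (k-1)) = 1 := by
          rw [hv' _ _ (Nat.le_add_right _ _) (by omega)]
          rw [Stmt11Aux.tOne_val, if_pos (by omega)]
        have hne01 : gg (finFunctionFinEquiv (Stmt11Aux.tZero k))
            ≠ gg (finFunctionFinEquiv (Stmt11Aux.tOne k)) := by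
          intro h
          rw [h] at h0
          exact absurd (h0.symm.trans h1) (by decide)
        have hsep := q.sep _ (hmemq _) _ (hmemq _) hne01
        apply hsep
        apply List.ext_getElem (by rw [Stmt11Aux.seg_length, Stmt11Aux.seg_length])
        intro x hx1 hx2
        rw [Stmt11Aux.seg_length] at hx1
        rw [Stmt11Aux.seg_getElem, Stmt11Aux.seg_getElem]
        rcases Nat.lt_or_ge x s.length with hxa | hxa
        · rw [hvlow _ x hxa, hvlow _ x hxa]
        · rw [hv' _ x hxa (by omega), hv' _ x hxa (by omega),
            Stmt11Aux.tZero_val, Stmt11Aux.tOne_val, if_neg (by omega)]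
      -- evasion
      have hsegE : seg (gg (finFunctionFinEquiv (fun x : Fin k => Stmt11Aux.eBit q s x)))
          (s.length + k) = Stmt11Aux.eL q s k := by
        rw [hggseg, Stmt11Aux.pat_apply, Stmt11Aux.eL_ofFn q s k]
      obtain ⟨i, hi1, hi2, hpred⟩ :=
        (hq (finFunctionFinEquiv (fun x : Fin k => Stmt11Aux.eBit q s x))).hpred _ rfl
          s.length ha hqlen
      have hjk : i - s.length < k := by omega
      have hseg_i : seg (gg (finFunctionFinEquiv (fun x : Fin k => Stmt11Aux.eBit q s x))) i
          = Stmt11Aux.eL q s (i - s.length) := by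
        apply List.ext_getElem
        · rw [Stmt11Aux.seg_length, Stmt11Aux.eL_len]; omega
        · intro x hx1 hx2
          rw [Stmt11Aux.seg_getElem]
          rw [(Stmt11Aux.eL_prefix q s (le_of_lt hjk)).getElem hx2]
          have hx1' : x < i := by rwa [Stmt11Aux.seg_length] at hx1
          exact Stmt11Aux.seg_val hsegE (by rw [Stmt11Aux.eL_len]; omega)
      have hbitval : gg (finFunctionFinEquiv (fun x : Fin k => Stmt11Aux.eBit q s x)) i
          = Stmt11Aux.eBit q s (i - s.length) := by
        have h1 : gg (finFunctionFinEquiv (fun x : Fin k => Stmt11Aux.eBit q s x)) i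
            = (Stmt11Aux.eL q s k)[i]'(by rw [Stmt11Aux.eL_len]; omega) :=
          Stmt11Aux.seg_val hsegE _
        rw [h1]
        have hpre2 := Stmt11Aux.eL_prefix q s (show (i - s.length) + 1 ≤ k by omega)
        rw [← hpre2.getElem (by rw [Stmt11Aux.eL_len]; omega)]
        rw [List.getElem_of_eq (Stmt11Aux.eL_succ q s (i - s.length))]
        rw [List.getElem_append_right (by rw [Stmt11Aux.eL_len]; omega)]
        have hidx : i - (Stmt11Aux.eL q s (i - s.length)).length = 0 := by
          rw [Stmt11Aux.eL_len]; omega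
        simp [hidx]
      have hLj : (Stmt11Aux.eL q s (i - s.length)).length ≤ q.len := by
        rw [Stmt11Aux.eL_len]; omega
      have hfinal : q.sig ⟨Stmt11Aux.eL q s (i - s.length), hLj⟩
          = Stmt11Aux.eBit q s (i - s.length) := by
        calc q.sig ⟨Stmt11Aux.eL q s (i - s.length), hLj⟩
            = q.sig ⟨seg (gg (finFunctionFinEquiv (fun x : Fin k => Stmt11Aux.eBit q s x))) i,
                by rw [Stmt11Aux.seg_length]; omega⟩ := by
              congr 1
              exact Subtype.ext hseg_i.symm
          _ = gg (finFunctionFinEquiv (fun x : Fin k => Stmt11Aux.eBit q s x)) i := hpred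
          _ = Stmt11Aux.eBit q s (i - s.length) := hbitval
      rw [Stmt11Aux.eBit_eq q s _ hLj] at hfinal
      have hx : ∀ x : Fin 2, x ≠ 1 - x := by decide
      exact hx _ hfinal
end

section
/- Let k ≥ 1 and let F ⊆ 2^ω satisfy property (⋆): for every countable set Ψ of functions ψ : ⋃_{i∈ω} 2^{ik} → 2^k there is g ∈ F such that for every ψ ∈ Ψ there are infinitely many i ∈ ω with ψ(g↾ik) = g↾[ik, (i+1)k). Then F witnesses 𝔢_2^const(k) ≤ |F|: for every predictor π : 2^{<ω} → 2 there is g ∈ F that is not k-constantly predicted by π. -/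
open Cardinal

/-- anti-list: length-u block always disagreeing with π after s. -/
def antiList (π : List (Fin 2) → Fin 2) (s : List (Fin 2)) : ℕ → List (Fin 2)
  | 0 => []
  | t + 1 => antiList π s t ++ [1 - π (s ++ antiList π s t)]

lemma antiList_succ (π s t) :
    antiList π s (t + 1) = antiList π s t ++ [1 - π (s ++ antiList π s t)] := rfl

lemma antiList_length (π s u) : (antiList π s u).length = u := by
  induction u with
  | zero => rfl
  | succ u ih => simp [antiList, ih]

lemma antiList_getElem (π s) {j u : ℕ} (h : j < u) :
    (antiList π s u)[j]'(by rw [antiList_length]; exact h)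
      = 1 - π (s ++ antiList π s j) := by
  induction u with
  | zero => omega
  | succ u ih =>
    rcases Nat.lt_succ_iff_lt_or_eq.mp h with h' | h'
    · simp only [antiList_succ]
      rw [List.getElem_append_left (by rw [antiList_length]; exact h')]
      exact ih h'
    · subst h'
      simp only [antiList_succ]
      rw [List.getElem_append_right (by rw [antiList_length])]
      simp [antiList_length]

lemma seg_succ {x : ℕ → Fin 2} (n : ℕ) : seg x (n + 1) = seg x n ++ [x n] := by
  rw [seg, List.ofFn_succ']
  simp [seg, List.concat_eq_append, Fin.coe_castSucc]

lemma seg_add (x : ℕ → Fin 2) (a t : ℕ) :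
    seg x (a + t) = seg x a ++ List.ofFn (fun j : Fin t => x (a + (j : ℕ))) := by
  induction t with
  | zero => simp
  | succ t ih =>
    rw [← Nat.add_assoc, seg_succ, ih, List.ofFn_succ']
    simp

theorem stmt12' (k : ℕ) (hk : 1 ≤ k) (F : Set (ℕ → Fin 2))
    (hstar : ∀ Ψ : Set (List (Fin 2) → (Fin k → Fin 2)), Ψ.Countable →
      ∃ g ∈ F, ∀ ψ ∈ Ψ, ∀ N : ℕ, ∃ i : ℕ, N ≤ i ∧
        ψ (seg g (i * k)) = fun t : Fin k => g (i * k + (t : ℕ))) :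
    ∀ π : List (Fin 2) → Fin 2, ∃ g ∈ F, ∀ N, ∃ m, N ≤ m ∧
      ∀ i, m ≤ i → i < m + k → g i ≠ π (seg g i) := by
  intro π
  set ψ : List (Fin 2) → (Fin k → Fin 2) :=
    fun s t => (antiList π s k)[(t : ℕ)]'(by rw [antiList_length]; exact t.2) with hψ
  obtain ⟨g, hgF, hg⟩ := hstar {ψ} (Set.countable_singleton _)
  refine ⟨g, hgF, ?_⟩
  intro N
  obtain ⟨i, hiN, heq⟩ := hg ψ rfl N
  set s := seg g (i * k) with hs
  -- claim: for t ≤ k, antiList π s t = ofFn (fun j : Fin t => g (i*k + j))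
  have claim : ∀ t, t ≤ k → antiList π s t = List.ofFn (fun j : Fin t => g (i * k + (j : ℕ))) := by
    intro t ht
    induction t with
    | zero => simp [antiList]
    | succ t ih =>
      have ht' : t < k := ht
      have ih' := ih (Nat.le_of_lt ht')
      have hval : g (i * k + t) = 1 - π (seg g (i * k + t)) := by
        have := congrFun heq ⟨t, ht'⟩
        simp only [hψ] at this
        rw [← this, antiList_getElem π s ht', ih', ← seg_add]
      rw [antiList_succ, ih', ← seg_add]
      conv_rhs => rw [List.ofFn_succ']
      simp [hval, List.concat_eq_append, Fin.coe_castSucc]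
  have hdis : ∀ t, t < k → g (i * k + t) ≠ π (seg g (i * k + t)) := by
    intro t ht
    have := congrFun heq ⟨t, ht⟩
    simp only [hψ] at this
    rw [antiList_getElem π s ht, claim t (Nat.le_of_lt ht), ← seg_add] at this
    rw [← this]
    intro hcon
    have : ∀ a : Fin 2, 1 - a ≠ a := by decide
    exact this _ hcon
  refine ⟨i * k, le_trans hiN (Nat.le_mul_of_pos_right i hk), ?_⟩
  intro j hj1 hj2
  have : j = i * k + (j - i * k) := by omega
  rw [this]
  exact hdis _ (by omega)

/-- Lemma 3.4: if `F ⊆ 2^ω` satisfies (⋆) — for every countable set `Ψ` of functions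
`ψ : ⋃ᵢ 2^{ik} → 2ᵏ` there is `g ∈ F` with `ψ(g↾ik) = g↾[ik,(i+1)k)` for infinitely many `i`,
for every `ψ ∈ Ψ` — then `F` witnesses `𝔢₂ᶜᵒⁿˢᵗ(k) ≤ |F|`. -/
theorem stmt12 (k : ℕ) (hk : 1 ≤ k) (F : Set (ℕ → Fin 2))
    (hstar : ∀ Ψ : Set (List (Fin 2) → (Fin k → Fin 2)), Ψ.Countable →
      ∃ g ∈ F, ∀ ψ ∈ Ψ, ∀ N : ℕ, ∃ i : ℕ, N ≤ i ∧
        ψ (seg g (i * k)) = fun t : Fin k => g (i * k + (t : ℕ))) :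
    eConst 2 k ≤ #F ∧
    ∀ π : List (Fin 2) → Fin 2, ∃ g ∈ F, ¬ KPred k π g := by
  constructor
  · apply csInf_le (OrderBot.bddBelow _)
    refine ⟨F, rfl, ?_⟩
    intro π
    obtain ⟨g, hgF, hg⟩ := stmt12' k hk F hstar π
    refine ⟨g, hgF, ?_⟩
    rintro ⟨N, hN⟩
    obtain ⟨m, hm, hev⟩ := hg N
    obtain ⟨i, h1, h2, h3⟩ := hN m hm
    exact hev i h1 h2 h3
  · intro π
    obtain ⟨g, hgF, hg⟩ := stmt12' k hk F hstar π
    refine ⟨g, hgF, ?_⟩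
    rintro ⟨N, hN⟩
    obtain ⟨m, hm, hev⟩ := hg N
    obtain ⟨i, h1, h2, h3⟩ := hN m hm
    exact hev i h1 h2 h3
end

section
/- Let k ≥ 1. For every predictor π : 2^{<ω} → 2 there exists a function φ : ⋃_{i∈ω} 2^{ik} → 2^k such that for every g ∈ 2^ω: if there are infinitely many i ∈ ω with φ(g↾ik) = g↾[ik, (i+1)k), then π does not k-constantly predict g. Namely, one may take φ(σ), for σ of length ik, to be the unique τ ∈ 2^k such that π predicts σ⌢τ incorrectly at every position in the interval [ik, (i+1)k), i.e., (σ⌢τ)(j) ≠ π((σ⌢τ)↾j) for all ik ≤ j < (i+1)k. -/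
open Cardinal

/-- Mispredicted extension of `σ`, built step by step. -/
def ext (π : List (Fin 2) → Fin 2) (σ : List (Fin 2)) : ℕ → List (Fin 2)
  | 0 => []
  | m+1 => ext π σ m ++ [1 - π (σ ++ ext π σ m)]

lemma ext_length (π : List (Fin 2) → Fin 2) (σ : List (Fin 2)) (m : ℕ) :
    (ext π σ m).length = m := by
  induction m with
  | zero => rfl
  | succ m ih => simp [ext, ih]

lemma ext_getD (π : List (Fin 2) → Fin 2) (σ : List (Fin 2)) (m j : ℕ) (hj : j < m) :
    (ext π σ m).getD j 0 = 1 - π (σ ++ ext π σ j) := by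
  induction m with
  | zero => omega
  | succ m ih =>
    rcases Nat.lt_succ_iff_lt_or_eq.mp hj with h | h
    · rw [ext, List.getD_append _ _ _ _ (by rw [ext_length]; exact h)]
      exact ih h
    · subst h
      rw [ext, List.getD_append_right _ _ _ _ (by rw [ext_length])]
      simp [ext_length]

lemma ext_take (π : List (Fin 2) → Fin 2) (σ : List (Fin 2)) (m j : ℕ) (hj : j ≤ m) :
    (ext π σ m).take j = ext π σ j := by
  induction m with
  | zero => simp_all; subst hj; rfl
  | succ m ih =>
    rcases Nat.lt_succ_iff_lt_or_eq.mp (Nat.lt_succ_of_le hj) with h | h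
    · rw [ext, List.take_append_of_le_length (by rw [ext_length]; omega)]
      exact ih (by omega)
    · subst h
      rw [List.take_of_length_le (by rw [ext_length])]

lemma seg_getD {n : ℕ} (g : ℕ → Fin n) [NeZero n] (L j : ℕ) (hj : j < L) :
    (seg g L).getD j 0 = g j := by
  have hlen : j < (seg g L).length := by simp [seg, hj]
  rw [List.getD_eq_getElem _ _ hlen]
  simp [seg]

lemma seg_take {n : ℕ} (g : ℕ → Fin n) (L j : ℕ) (hj : j ≤ L) :
    (seg g L).take j = seg g j := by
  apply List.ext_getElem
  · simp [seg]; omega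
  · intro i h1 h2
    rw [List.getElem_take]
    simp [seg]

/-- For every predictor `π` there is `φ : ⋃ᵢ 2^{ik} → 2ᵏ` such that `φ(σ)` (for `|σ| = ik`)
extends `σ` by a block mispredicted by `π` at every position of `[ik,(i+1)k)`, and any
`g ∈ 2^ω` with `φ(g↾ik) = g↾[ik,(i+1)k)` for infinitely many `i` is not k-constantly
predicted by `π`. -/
theorem stmt13 (k : ℕ) (hk : 1 ≤ k) (π : List (Fin 2) → Fin 2) :
    ∃ φ : List (Fin 2) → (Fin k → Fin 2),
      (∀ σ : List (Fin 2), (∃ i : ℕ, σ.length = i * k) →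
        ∀ j : ℕ, σ.length ≤ j → j < σ.length + k →
          (σ ++ List.ofFn (φ σ)).getD j 0 ≠ π ((σ ++ List.ofFn (φ σ)).take j)) ∧
      ∀ g : ℕ → Fin 2,
        (∀ N : ℕ, ∃ i : ℕ, N ≤ i ∧
          φ (seg g (i * k)) = fun t : Fin k => g (i * k + (t : ℕ))) →
        ¬ KPred k π g := by
  have hofn : ∀ σ, List.ofFn (fun t : Fin k => (ext π σ k).getD t 0) = ext π σ k := by
    intro σ
    apply List.ext_getElem
    · simp [ext_length]
    · intro i h1 h2
      simp only [List.getElem_ofFn]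
      rw [List.getD_eq_getElem _ _ (by rw [ext_length]; simpa using h1)]
  have main : ∀ σ : List (Fin 2), ∀ j : ℕ, σ.length ≤ j → j < σ.length + k →
      (σ ++ ext π σ k).getD j 0 ≠ π ((σ ++ ext π σ k).take j) := by
    intro σ j hj1 hj2
    have hflip : ∀ x : Fin 2, 1 - x ≠ x := by decide
    rw [List.getD_append_right _ _ _ _ hj1,
      ext_getD π σ k (j - σ.length) (by omega),
      List.take_append,
      List.take_of_length_le (by omega),
      ext_take π σ k (j - σ.length) (by omega)]
    exact hflip _
  refine ⟨fun σ t => (ext π σ k).getD t 0, ?_, ?_⟩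
  · intro σ _ j hj1 hj2
    rw [hofn σ]
    exact main σ j hj1 hj2
  · rintro g hinf ⟨N, hN⟩
    obtain ⟨i, hiN, hφ⟩ := hinf N
    obtain ⟨j, hj1, hj2, hj3⟩ := hN (i * k) (le_trans hiN (Nat.le_mul_of_pos_right i hk))
    have hσlen : (seg g (i * k)).length = i * k := by simp [seg]
    have hφ' : (fun t : Fin k => (ext π (seg g (i * k)) k).getD t 0)
        = fun t : Fin k => g (i * k + (t : ℕ)) := hφ
    have key : seg g (i * k) ++ ext π (seg g (i * k)) k = seg g (i * k + k) := by
      rw [← hofn, hφ']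
      apply List.ext_getElem
      · simp [seg]
      · intro t h1 h2
        simp only [seg, List.getElem_ofFn] at h1 h2 ⊢
        rcases Nat.lt_or_ge t (i * k) with h | h
        · rw [List.getElem_append_left (by simpa [seg] using h)]
          simp [seg]
        · rw [List.getElem_append_right (by simpa [seg] using h)]
          simp only [List.getElem_ofFn, seg, List.length_ofFn]
          congr 1
          omega
    have := main (seg g (i * k)) j (by omega) (by omega)
    rw [key, seg_getD g _ j (by omega), seg_take g _ j (by omega)] at this
    exact this hj3
end
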